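/- arXiv:1605.03931 — 2 statements merged into one kernel-verified Lean document; each statement's English description precedes it below -/
import Mathlib

section
/- Let ω be a modulus of continuity and define g(ζ) = Σ_{n=1}^∞ ω(4^{-n})(ζ^{4^n} + ζ̄^{4^n}) for ζ on the unit circle. Then the Hankel matrix Γ_g = {ĝ(j+k)}_{j≥1, k≥0} satisfies s_j(Γ_g) ≥ (3/32)·ω((j+1)^{-1}) for all j ≥ 0, where s_j denotes singular values. -/
/-!
Let `N = 4 ^ n` be the least power of `4` with `2 (j + 1) ≤ N`, so `N < 8 (j + 1)`. For
`a, b ≤ j` the entry `ĝ(b + 1 + (N - 1 - a)) = ĝ(N + b - a)` is `ω(1/N)` when `a = b` and `0`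
otherwise, because `N + b - a` lies strictly between `N / 2` and `2 N`. Hence `Γ` compresses to
`ω(1/N) • I` on `j + 1` columns and rows. An operator `R` of rank `≤ j` annihilates a nonzero
combination `x` of those columns, and Bessel's inequality over the rows gives
`‖(Γ - R) x‖ ≥ |ω(1/N)| ‖x‖`. Subadditivity then gives `ω(1/(j+1)) ≤ 8 ω(1/N)`.
-/

open scoped ENNReal

/-- The `j`-th singular value (approximation number) of a bounded operator:
`s_j(T) = inf {‖T - R‖ : rank R ≤ j}`. -/
noncomputable def singularValue {𝕜 H : Type*} [RCLike 𝕜] [NormedAddCommGroup H]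
    [InnerProductSpace 𝕜 H] (j : ℕ) (T : H →L[𝕜] H) : ℝ :=
  sInf {c : ℝ | ∃ R : H →L[𝕜] H, LinearMap.rank (R : H →ₗ[𝕜] H) ≤ j ∧ c = ‖T - R‖}

/-- The Fourier coefficients of `g(ζ) = ∑_{n≥1} ω(4^{-n})(ζ^{4^n} + ζ̄^{4^n})`:
`ĝ(m) = ω(1/m) = ω(4^{-n})` if `m = 4^n` for some `n ≥ 1`, and `ĝ(m) = 0`
otherwise (for `m ≥ 1`). -/
noncomputable def hankelCoef (ω : ℝ → ℝ) (m : ℕ) : ℝ :=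
  letI := Classical.propDecidable
  if ∃ n : ℕ, 1 ≤ n ∧ m = 4 ^ n then ω (1 / (m : ℝ)) else 0

open scoped InnerProductSpace

theorem Nat.le_of_pow_lt_mul_pow {b c m n : ℕ} (hcb : c ≤ b) (h : b ^ m < c * b ^ n) : m ≤ n := by
  by_contra! hnm
  have hb : 0 < b := by
    by_contra! hb0
    simp [show c = 0 by omega] at h
  have : c * b ^ n ≤ b ^ m :=
    calc c * b ^ n ≤ b * b ^ n := Nat.mul_le_mul_right _ hcb
      _ = b ^ (n + 1) := by ring
      _ ≤ b ^ m := Nat.pow_le_pow_right hb hnm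
  omega

theorem Nat.exists_le_pow_lt_mul {b x : ℕ} (hb : 1 < b) (hx : 1 < x) :
    ∃ n, 1 ≤ n ∧ x ≤ b ^ n ∧ b ^ n < b * x := by
  refine ⟨clog b x, clog_pos hb hx, le_pow_clog hb x, ?_⟩
  rw [← Nat.succ_pred_eq_of_pos (clog_pos hb hx), pow_succ']
  exact Nat.mul_lt_mul_of_pos_left (pow_pred_clog_lt_self hb hx) (by omega)

theorem LinearMap.exists_ne_zero_map_eq_zero_of_rank_lt {K V ι : Type*} [DivisionRing K]
    [AddCommGroup V] [Module K V] [Fintype ι] {f : (ι → K) →ₗ[K] V}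
    (hf : f.rank < Fintype.card ι) : ∃ c, c ≠ 0 ∧ f c = 0 := by
  by_contra! h
  have hinj : Function.Injective f :=
    LinearMap.ker_eq_bot.1 (LinearMap.ker_eq_bot'.2 fun c hc => by_contra fun hc0 => h c hc0 hc)
  have := lift_rank_range_of_injective f hinj
  rw [rank_fun', Cardinal.lift_natCast] at this
  exact (Cardinal.lift_lt.2 hf).ne (by rwa [Cardinal.lift_natCast])

theorem lp.orthonormal_single {𝕜 ι : Type*} [RCLike 𝕜] [DecidableEq ι] :
    Orthonormal 𝕜 (fun i : ι => lp.single 2 i (1 : 𝕜) : ι → lp (fun _ : ι => 𝕜) 2) := by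
  rw [orthonormal_iff_ite]
  intro i j
  rw [lp.inner_single_left, lp.single_apply]
  split_ifs <;> simp_all

section DiagonalCompression

variable {𝕜 E F ι : Type*} [RCLike 𝕜] [NormedAddCommGroup E] [InnerProductSpace 𝕜 E]
  [NormedAddCommGroup F] [InnerProductSpace 𝕜 F] [Fintype ι] [DecidableEq ι]

theorem norm_le_opNorm_sub_of_inner_eq_ite {T R : E →L[𝕜] F} {u : ι → E} {v : ι → F}
    (hu : Orthonormal 𝕜 u) (hv : Orthonormal 𝕜 v) {w : 𝕜}
    (hT : ∀ a b, ⟪v b, T (u a)⟫_𝕜 = if a = b then w else 0)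
    (hR : LinearMap.rank (R : E →ₗ[𝕜] F) < Fintype.card ι) :
    ‖w‖ ≤ ‖T - R‖ := by
  obtain ⟨c, hc0, hRc⟩ := LinearMap.exists_ne_zero_map_eq_zero_of_rank_lt
    ((LinearMap.rank_comp_le_left (Fintype.linearCombination 𝕜 u) _).trans_lt hR)
  set x := ∑ a, c a • u a
  have hRx : R x = 0 := by
    simpa only [LinearMap.comp_apply, Fintype.linearCombination_apply, ContinuousLinearMap.coe_coe]
      using hRc
  have hx : ‖x‖ ^ 2 = ∑ a, ‖c a‖ ^ 2 := by
    simpa using hu.orthogonalFamily.norm_sum c Finset.univ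
  have hxpos : 0 < ‖x‖ := norm_pos_iff.2 fun hx0 =>
    hc0 (funext (Fintype.linearIndependent_iff.1 hu.linearIndependent c hx0))
  have hTRx (b : ι) : ⟪v b, (T - R) x⟫_𝕜 = w * c b := by
    rw [sub_apply, hRx, sub_zero, map_sum, inner_sum]
    simp [inner_smul_right, hT, mul_comm]
  have hbessel : ‖w‖ * ‖x‖ ≤ ‖(T - R) x‖ := by
    have := hv.sum_inner_products_le ((T - R) x) (s := Finset.univ)
    simp only [hTRx, norm_mul, mul_pow, ← Finset.mul_sum, ← hx] at this
    rw [← mul_pow] at this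
    exact (pow_le_pow_iff_left₀ (by positivity) (norm_nonneg _) two_ne_zero).1 this
  exact le_of_mul_le_mul_right (hbessel.trans ((T - R).le_opNorm x)) hxpos

end DiagonalCompression

section SingularValue

variable {𝕜 H ι : Type*} [RCLike 𝕜] [NormedAddCommGroup H] [InnerProductSpace 𝕜 H]

theorem le_singularValue_of_forall_rank_le {j : ℕ} {T : H →L[𝕜] H} {c : ℝ}
    (h : ∀ R : H →L[𝕜] H, LinearMap.rank (R : H →ₗ[𝕜] H) ≤ j → c ≤ ‖T - R‖) :
    c ≤ singularValue j T :=
  le_csInf ⟨‖T - 0‖, 0, by simp, rfl⟩ (by rintro _ ⟨R, hR, rfl⟩; exact h R hR)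

theorem norm_le_singularValue_of_inner_eq_ite [Fintype ι] [DecidableEq ι] {j : ℕ}
    {T : H →L[𝕜] H} {u v : ι → H} (hu : Orthonormal 𝕜 u) (hv : Orthonormal 𝕜 v) {w : 𝕜}
    (hT : ∀ a b, ⟪v b, T (u a)⟫_𝕜 = if a = b then w else 0) (hj : j < Fintype.card ι) :
    ‖w‖ ≤ singularValue j T :=
  le_singularValue_of_forall_rank_le fun _ hR =>
    norm_le_opNorm_sub_of_inner_eq_ite hu hv hT (hR.trans_lt (by exact_mod_cast hj))

end SingularValue

section ModulusOfContinuity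

variable {ω : ℝ → ℝ}

theorem nonneg_of_monotoneOn_of_subadditive (hmono : MonotoneOn ω (Set.Ici 0))
    (hsub : ∀ x : ℝ, 0 ≤ x → ∀ y : ℝ, 0 ≤ y → ω (x + y) ≤ ω x + ω y) {x : ℝ} (hx : 0 ≤ x) :
    0 ≤ ω x := by
  have h0 : 0 ≤ ω 0 := by simpa using hsub 0 le_rfl 0 le_rfl
  exact h0.trans (hmono (Set.mem_Ici.2 le_rfl) hx hx)

theorem apply_natCast_mul_le_of_subadditive
    (hsub : ∀ x : ℝ, 0 ≤ x → ∀ y : ℝ, 0 ≤ y → ω (x + y) ≤ ω x + ω y) {t : ℝ} (ht : 0 ≤ t)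
    {k : ℕ} (hk : 1 ≤ k) : ω (k * t) ≤ k * ω t := by
  induction k, hk using Nat.le_induction with
  | base => simp
  | succ k hk ih =>
    push_cast
    calc ω ((k + 1) * t) = ω (k * t + t) := by ring_nf
      _ ≤ ω (k * t) + ω t := hsub _ (by positivity) _ ht
      _ ≤ (k + 1) * ω t := by linarith

theorem apply_le_natCast_mul_of_le_natCast_mul (hmono : MonotoneOn ω (Set.Ici 0))
    (hsub : ∀ x : ℝ, 0 ≤ x → ∀ y : ℝ, 0 ≤ y → ω (x + y) ≤ ω x + ω y) {x y : ℝ} (hx : 0 ≤ x)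
    (hy : 0 ≤ y) {k : ℕ} (hk : 1 ≤ k) (hxy : x ≤ k * y) : ω x ≤ k * ω y :=
  (hmono hx (Set.mem_Ici.2 (by positivity)) hxy).trans
    (apply_natCast_mul_le_of_subadditive hsub hy hk)

end ModulusOfContinuity

theorem hankelCoef_add_sub_pow_four (ω : ℝ → ℝ) {n a b : ℕ} (hn : 1 ≤ n) (ha : 2 * a < 4 ^ n)
    (hb : 2 * b < 4 ^ n) :
    hankelCoef ω (b + 1 + (4 ^ n - 1 - a)) = if a = b then ω (1 / 4 ^ n) else 0 := by
  unfold hankelCoef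
  by_cases hab : a = b
  · subst hab
    rw [if_pos rfl, if_pos ⟨n, hn, by omega⟩, show a + 1 + (4 ^ n - 1 - a) = 4 ^ n by omega]
    push_cast
    rfl
  · rw [if_neg hab, if_neg]
    rintro ⟨m, -, hm⟩
    have hmn : m ≤ n := Nat.le_of_pow_lt_mul_pow (b := 4) (c := 2) (by norm_num) (by omega)
    have hnm : n ≤ m := Nat.le_of_pow_lt_mul_pow (b := 4) (c := 2) (by norm_num) (by omega)
    rw [le_antisymm hmn hnm] at hm
    omega

theorem stmt11_general (ω : ℝ → ℝ)
    (hmono : MonotoneOn ω (Set.Ici 0))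
    (hsub : ∀ x : ℝ, 0 ≤ x → ∀ y : ℝ, 0 ≤ y → ω (x + y) ≤ ω x + ω y)
    (Γ : lp (fun _ : ℕ => ℝ) 2 →L[ℝ] lp (fun _ : ℕ => ℝ) 2)
    (hΓ : ∀ i k : ℕ,
      inner (𝕜 := ℝ) (Γ (lp.single 2 k (1 : ℝ))) (lp.single 2 i (1 : ℝ))
        = hankelCoef ω (i + 1 + k))
    (j : ℕ) :
    (3 / 32 : ℝ) * ω (1 / (j + 1 : ℝ)) ≤ singularValue j Γ := by
  obtain ⟨n, hn, hjn, hnj⟩ :=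
    Nat.exists_le_pow_lt_mul (b := 4) (x := 2 * (j + 1)) (by norm_num) (by omega)
  have hblock : ‖ω (1 / 4 ^ n)‖ ≤ singularValue j Γ := by
    refine norm_le_singularValue_of_inner_eq_ite
      (lp.orthonormal_single.comp (fun a : Fin (j + 1) => 4 ^ n - 1 - (a : ℕ)) fun a b hab => by
        simp only at hab; ext; omega)
      (lp.orthonormal_single.comp _ Fin.val_injective) (fun a b => ?_) (by simp)
    rw [real_inner_comm, Function.comp_apply, Function.comp_apply, hΓ,
      hankelCoef_add_sub_pow_four ω hn (by omega) (by omega)]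
    simp only [Fin.val_inj]
  have hscale : ω (1 / (j + 1)) ≤ 8 * ω (1 / 4 ^ n) := by
    have h4n : (4 : ℝ) ^ n ≤ 8 * (j + 1) := by exact_mod_cast (by omega : 4 ^ n ≤ 8 * (j + 1))
    have h := apply_le_natCast_mul_of_le_natCast_mul hmono hsub (x := 1 / (j + 1))
      (y := 1 / 4 ^ n) (k := 8) (by positivity) (by positivity) (by norm_num) (by
        rw [Nat.cast_ofNat, mul_one_div, div_le_div_iff₀ (by positivity) (by positivity)]
        linarith)
    rwa [Nat.cast_ofNat] at h
  have hnonneg : 0 ≤ ω (1 / (j + 1)) :=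
    nonneg_of_monotoneOn_of_subadditive hmono hsub (by positivity)
  rw [Real.norm_eq_abs] at hblock
  linarith [le_abs_self (ω (1 / 4 ^ n))]

/-- Let `ω` be a modulus of continuity with `∑_n ω(4^{-n}) < ∞`, and let `Γ` be a
bounded operator on `ℓ²` realizing the Hankel matrix `Γ_g = {ĝ(j+k)}_{j≥1,k≥0}` of
`g(ζ) = ∑_{n≥1} ω(4^{-n})(ζ^{4^n} + ζ̄^{4^n})`, i.e. whose matrix entries in the
standard basis are `⟪Γ e_k, e_i⟫ = ĝ((i+1)+k)`.  Then
`s_j(Γ) ≥ (3/32)·ω((j+1)⁻¹)` for all `j ≥ 0`. -/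
theorem stmt11 (ω : ℝ → ℝ)
    (hmono : MonotoneOn ω (Set.Ici 0))
    (hcont : ContinuousOn ω (Set.Ici 0))
    (h0 : ω 0 = 0)
    (hpos : ∀ x : ℝ, 0 < x → 0 < ω x)
    (hsub : ∀ x : ℝ, 0 ≤ x → ∀ y : ℝ, 0 ≤ y → ω (x + y) ≤ ω x + ω y)
    (hsum : Summable fun n : ℕ => ω ((4 : ℝ) ^ (-(n : ℤ))))
    (Γ : lp (fun _ : ℕ => ℝ) 2 →L[ℝ] lp (fun _ : ℕ => ℝ) 2)
    (hΓ : ∀ i k : ℕ,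
      inner (𝕜 := ℝ) (Γ (lp.single 2 k (1 : ℝ))) (lp.single 2 i (1 : ℝ))
        = hankelCoef ω (i + 1 + k))
    (j : ℕ) :
    (3 / 32 : ℝ) * ω (1 / (j + 1 : ℝ)) ≤ singularValue j Γ :=
  stmt11_general ω hmono hsub Γ hΓ j
end

section
/- Let ω be a modulus of continuity with ω*(x) = x∫_x^∞ ω(t)/t² dt finite. Let N ∈ ℤ and suppose a bounded function g on ℝ decomposes as g = r + q where ‖q‖_∞ ≤ c·ω(2^{-N}) and r satisfies ‖r‖_{S_p^l} ≤ c·2^N·ω*(2^{-N})·D for some D > 0 (as an operator). Then for 1 ≤ j ≤ l, s_j of the corresponding operator sum satisfies s_j(r+q) ≤ c·[(1+j)^{-1/p}·2^N·ω*(2^{-N})·D + ω(2^{-N})]. In particular, choosing N with 1 ≤ (1+j)^{-1/p}·2^N·D ≤ 2 and using ω ≤ ω* and monotonicity/doubling of ω*, one gets s_j(r+q) ≤ c'·ω*((1+j)^{-1/p}·D). -/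
open MeasureTheory

/-- `ω*(x) = x·∫_x^∞ ω(t)/t² dt`. -/
noncomputable def omegaStar (ω : ℝ → ℝ) (x : ℝ) : ℝ :=
  x * ∫ t in Set.Ioi x, ω t / t ^ 2

open Set

section sv
variable {H : Type*} [NormedAddCommGroup H] [InnerProductSpace ℂ H]

lemma sv_set_nonempty (j : ℕ) (T : H →L[ℂ] H) :
    {c : ℝ | ∃ R : H →L[ℂ] H, LinearMap.rank (R : H →ₗ[ℂ] H) ≤ j ∧ c = ‖T - R‖}.Nonempty := by
  refine ⟨‖T‖, 0, ?_, by simp⟩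
  simp [LinearMap.rank_zero]

lemma sv_set_bdd (j : ℕ) (T : H →L[ℂ] H) :
    BddBelow {c : ℝ | ∃ R : H →L[ℂ] H, LinearMap.rank (R : H →ₗ[ℂ] H) ≤ j ∧ c = ‖T - R‖} := by
  refine ⟨0, fun x hx => ?_⟩
  obtain ⟨R, _, rfl⟩ := hx
  positivity

lemma sv_nonneg (j : ℕ) (T : H →L[ℂ] H) : 0 ≤ singularValue j T := by
  apply le_csInf (sv_set_nonempty j T)
  rintro b ⟨R, _, rfl⟩; positivity

lemma sv_anti {j k : ℕ} (h : j ≤ k) (T : H →L[ℂ] H) :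
    singularValue k T ≤ singularValue j T := by
  apply csInf_le_csInf (sv_set_bdd k T) (sv_set_nonempty j T)
  rintro b ⟨R, hR, rfl⟩
  exact ⟨R, hR.trans (by exact_mod_cast Nat.cast_le.mpr h), rfl⟩

lemma sv_add_le (j : ℕ) (T q : H →L[ℂ] H) :
    singularValue j (T + q) ≤ singularValue j T + ‖q‖ := by
  have key : ∀ b ∈ {c : ℝ | ∃ R : H →L[ℂ] H, LinearMap.rank (R : H →ₗ[ℂ] H) ≤ j ∧ c = ‖T - R‖},
      singularValue j (T + q) - ‖q‖ ≤ b := by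
    rintro b ⟨R, hR, rfl⟩
    have h1 : singularValue j (T + q) ≤ ‖T + q - R‖ :=
      csInf_le (sv_set_bdd j (T + q)) ⟨R, hR, rfl⟩
    have h2 : ‖T + q - R‖ ≤ ‖T - R‖ + ‖q‖ := by
      have : T + q - R = (T - R) + q := by abel
      rw [this]; exact norm_add_le _ _
    linarith
  have := le_csInf (sv_set_nonempty j T) key
  unfold singularValue at *
  linarith

end sv

section an
variable (ω : ℝ → ℝ) (hmono : MonotoneOn ω (Set.Ici 0)) (h0 : ω 0 = 0)
    (hint : ∀ x : ℝ, 0 < x → IntegrableOn (fun t => ω t / t ^ 2) (Set.Ioi x))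

include hmono h0 in
lemma omega_nonneg {x : ℝ} (hx : 0 ≤ x) : 0 ≤ ω x := by
  have := hmono (self_mem_Ici) hx hx
  rwa [h0] at this

include hmono h0 in
lemma omegaStar_nonneg {x : ℝ} (hx : 0 < x) : 0 ≤ omegaStar ω x := by
  apply mul_nonneg hx.le
  apply setIntegral_nonneg measurableSet_Ioi
  intro t ht
  have ht' : 0 < t := hx.trans ht
  have := omega_nonneg ω hmono h0 ht'.le
  positivity

lemma inv_sq_int {x : ℝ} (hx : 0 < x) : ∫ t in Ioi x, (1 : ℝ) / t ^ 2 = x⁻¹ := by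
  have h : ∫ t in Ioi x, (1 : ℝ) / t ^ 2 = ∫ t in Ioi x, t ^ (-2 : ℝ) := by
    apply setIntegral_congr_fun measurableSet_Ioi
    intro t ht
    have ht' : 0 < t := hx.trans ht
    show (1:ℝ) / t ^ 2 = t ^ (-2:ℝ)
    rw [Real.rpow_neg ht'.le, show (2:ℝ) = ((2:ℕ):ℝ) by norm_num, Real.rpow_natCast]
    simp [one_div]
  rw [h, integral_Ioi_rpow_of_lt (by norm_num) hx]
  norm_num
  rw [Real.rpow_neg_one]

lemma inv_sq_integrable {x : ℝ} (hx : 0 < x) :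
    IntegrableOn (fun t : ℝ => 1 / t ^ 2) (Ioi x) := by
  have := integrableOn_Ioi_rpow_of_lt (by norm_num : (-2:ℝ) < -1) hx
  apply this.congr_fun _ measurableSet_Ioi
  intro t ht
  have ht' : 0 < t := hx.trans ht
  show t ^ (-2:ℝ) = (1:ℝ) / t ^ 2
  rw [Real.rpow_neg ht'.le, show (2:ℝ) = ((2:ℕ):ℝ) by norm_num, Real.rpow_natCast]
  simp [one_div]

include hmono h0 hint in
lemma omega_le_omegaStar {x : ℝ} (hx : 0 < x) : ω x ≤ omegaStar ω x := by
  have key : ω x * x⁻¹ ≤ ∫ t in Ioi x, ω t / t ^ 2 := by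
    have h1 : ∫ t in Ioi x, ω x * (1 / t ^ 2) = ω x * x⁻¹ := by
      rw [integral_const_mul, inv_sq_int hx]
    rw [← h1]
    apply setIntegral_mono_on ((inv_sq_integrable hx).const_mul _) (hint x hx)
      measurableSet_Ioi
    intro t ht
    have ht' : 0 < t := hx.trans ht
    rw [mul_one_div]
    apply div_le_div_of_nonneg_right ?_ (by positivity)
    · exact hmono hx.le ht'.le (le_of_lt ht)
  calc ω x = x * (ω x * x⁻¹) := by field_simp
  _ ≤ x * ∫ t in Ioi x, ω t / t ^ 2 := by
      exact mul_le_mul_of_nonneg_left key hx.le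
  _ = omegaStar ω x := rfl

lemma omegaStar_eq {x : ℝ} (hx : 0 < x) :
    omegaStar ω x = ∫ u in Ioi (1:ℝ), ω (x * u) / u ^ 2 := by
  have h := integral_comp_mul_left_Ioi (fun t => ω t / t ^ 2) 1 hx
  rw [mul_one] at h
  have h2 : ∫ u in Ioi (1:ℝ), ω (x * u) / u ^ 2
      = ∫ u in Ioi (1:ℝ), x ^ 2 * (ω (x * u) / (x * u) ^ 2) := by
    apply setIntegral_congr_fun measurableSet_Ioi
    intro u hu
    have hu' : (0:ℝ) < u := lt_trans one_pos hu
    field_simp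
  rw [h2, integral_const_mul, h, smul_eq_mul, omegaStar]
  field_simp

include hint in
lemma sub_integrable {x : ℝ} (hx : 0 < x) :
    IntegrableOn (fun u : ℝ => ω (x * u) / u ^ 2) (Ioi 1) := by
  have h := (integrableOn_Ioi_comp_mul_left_iff (fun t => ω t / t ^ 2) 1 hx).mpr
    (by rw [mul_one]; exact hint x hx)
  have h2 : IntegrableOn (fun u : ℝ => x ^ 2 * (ω (x * u) / (x * u) ^ 2)) (Ioi 1) :=
    h.const_mul (x ^ 2)
  apply h2.congr_fun _ measurableSet_Ioi
  intro u hu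
  have hu' : (0:ℝ) < u := lt_trans one_pos hu
  show x ^ 2 * (ω (x * u) / (x * u) ^ 2) = ω (x * u) / u ^ 2
  field_simp

include hmono hint in
lemma omegaStar_mono {x y : ℝ} (hx : 0 < x) (hxy : x ≤ y) :
    omegaStar ω x ≤ omegaStar ω y := by
  have hy : 0 < y := hx.trans_le hxy
  rw [omegaStar_eq ω hx, omegaStar_eq ω hy]
  apply setIntegral_mono_on (sub_integrable ω hint hx) (sub_integrable ω hint hy)
    measurableSet_Ioi
  intro u hu
  have hu' : (0:ℝ) < u := lt_trans one_pos hu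
  apply div_le_div_of_nonneg_right _ (by positivity)
  exact hmono (mem_Ici.mpr (by positivity)) (mem_Ici.mpr (by positivity)) (by nlinarith)
end an

/-- Abstract form of the key estimate in the main theorem: let `ω` be a modulus of
continuity with finite `ω*`, `N ∈ ℤ`, and suppose the operator `r + q` satisfies
`‖q‖ ≤ c·ω(2^{-N})` and `‖r‖_{S_p^l} ≤ c·2^N·ω*(2^{-N})·D`.  Then for `1 ≤ j ≤ l`,
`s_j(r+q) ≤ c·[(1+j)^{-1/p}·2^N·ω*(2^{-N})·D + ω(2^{-N})]`; and if moreover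
`1 ≤ (1+j)^{-1/p}·2^N·D ≤ 2`, then `s_j(r+q) ≤ 3c·ω*((1+j)^{-1/p}·D)`. -/
theorem stmt14 {H : Type*} [NormedAddCommGroup H] [InnerProductSpace ℂ H]
    [CompleteSpace H] (ω : ℝ → ℝ)
    (hmono : MonotoneOn ω (Set.Ici 0))
    (hcont : ContinuousOn ω (Set.Ici 0))
    (h0 : ω 0 = 0)
    (hpos : ∀ x : ℝ, 0 < x → 0 < ω x)
    (hsub : ∀ x : ℝ, 0 ≤ x → ∀ y : ℝ, 0 ≤ y → ω (x + y) ≤ ω x + ω y)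
    (hint : ∀ x : ℝ, 0 < x → IntegrableOn (fun t => ω t / t ^ 2) (Set.Ioi x))
    (N : ℤ) (r q : H →L[ℂ] H) (c D p : ℝ) (hc : 0 < c) (hD : 0 < D) (hp : 1 ≤ p)
    (l j : ℕ) (hj1 : 1 ≤ j) (hjl : j ≤ l)
    (hq : ‖q‖ ≤ c * ω ((2 : ℝ) ^ (-N)))
    (hr : (∑ k ∈ Finset.range (l + 1), (singularValue k r) ^ p) ^ (1 / p)
        ≤ c * (2 : ℝ) ^ N * omegaStar ω ((2 : ℝ) ^ (-N)) * D) :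
    singularValue j (r + q)
        ≤ c * ((1 + j : ℝ) ^ (-(1 / p)) * (2 : ℝ) ^ N *
            omegaStar ω ((2 : ℝ) ^ (-N)) * D + ω ((2 : ℝ) ^ (-N))) ∧
      ((1 ≤ (1 + j : ℝ) ^ (-(1 / p)) * (2 : ℝ) ^ N * D ∧
          (1 + j : ℝ) ^ (-(1 / p)) * (2 : ℝ) ^ N * D ≤ 2) →
        singularValue j (r + q)
          ≤ 3 * c * omegaStar ω ((1 + j : ℝ) ^ (-(1 / p)) * D)) := by
  have hp0 : (0:ℝ) < p := lt_of_lt_of_le one_pos hp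
  have hj0 : (0:ℝ) < 1 + (j:ℝ) := by positivity
  have hA : (0:ℝ) < (1 + (j:ℝ)) ^ (-(1/p)) := Real.rpow_pos_of_pos hj0 _
  have hx0 : (0:ℝ) < (2:ℝ) ^ (-N) := by positivity
  have hωs0 : 0 ≤ omegaStar ω ((2:ℝ) ^ (-N)) := omegaStar_nonneg ω hmono h0 hx0
  set s := singularValue j r with hs
  have hs0 : 0 ≤ s := sv_nonneg j r
  -- (1+j) * s^p ≤ Σ
  have hsum : (1 + (j:ℝ)) * s ^ p
      ≤ ∑ k ∈ Finset.range (l + 1), (singularValue k r) ^ p := by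
    calc (1 + (j:ℝ)) * s ^ p = ∑ _k ∈ Finset.range (j + 1), s ^ p := by
          rw [Finset.sum_const, Finset.card_range, nsmul_eq_mul]
          push_cast; ring
    _ ≤ ∑ k ∈ Finset.range (j + 1), (singularValue k r) ^ p := by
          apply Finset.sum_le_sum
          intro k hk
          exact Real.rpow_le_rpow hs0
            (sv_anti (Nat.lt_succ_iff.mp (Finset.mem_range.mp hk)) r) hp0.le
    _ ≤ ∑ k ∈ Finset.range (l + 1), (singularValue k r) ^ p := by
          apply Finset.sum_le_sum_of_subset_of_nonneg
          · exact Finset.range_subset_range.mpr (by omega)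
          · intro k _ _
            exact Real.rpow_nonneg (sv_nonneg k r) p
  -- s ≤ A * Σ^{1/p}
  have hsv : s ≤ (1 + (j:ℝ)) ^ (-(1/p)) *
      (∑ k ∈ Finset.range (l + 1), (singularValue k r) ^ p) ^ (1/p) := by
    have h1 : ((1 + (j:ℝ)) * s ^ p) ^ (1/p)
        ≤ (∑ k ∈ Finset.range (l + 1), (singularValue k r) ^ p) ^ (1/p) :=
      Real.rpow_le_rpow (by positivity) hsum (by positivity)
    have h2 : ((1 + (j:ℝ)) * s ^ p) ^ (1/p) = (1 + (j:ℝ)) ^ (1/p) * s := by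
      rw [Real.mul_rpow hj0.le (Real.rpow_nonneg hs0 p), ← Real.rpow_mul hs0,
        mul_one_div_cancel hp0.ne', Real.rpow_one]
    have hAinv : (1 + (j:ℝ)) ^ (-(1/p)) * (1 + (j:ℝ)) ^ (1/p) = 1 := by
      rw [← Real.rpow_add hj0]; simp
    calc s = (1 + (j:ℝ)) ^ (-(1/p)) * ((1 + (j:ℝ)) ^ (1/p) * s) := by
          rw [← mul_assoc, hAinv, one_mul]
    _ ≤ _ := mul_le_mul_of_nonneg_left (h2 ▸ h1) hA.le
  have hsvr : s ≤ (1 + (j:ℝ)) ^ (-(1/p)) *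
      (c * (2:ℝ) ^ N * omegaStar ω ((2:ℝ) ^ (-N)) * D) :=
    hsv.trans (mul_le_mul_of_nonneg_left hr hA.le)
  have part1 : singularValue j (r + q)
      ≤ c * ((1 + j : ℝ) ^ (-(1 / p)) * (2 : ℝ) ^ N *
          omegaStar ω ((2 : ℝ) ^ (-N)) * D + ω ((2 : ℝ) ^ (-N))) := by
    calc singularValue j (r + q) ≤ s + ‖q‖ := sv_add_le j r q
    _ ≤ (1 + (j:ℝ)) ^ (-(1/p)) * (c * (2:ℝ) ^ N * omegaStar ω ((2:ℝ) ^ (-N)) * D)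
        + c * ω ((2:ℝ) ^ (-N)) := add_le_add hsvr hq
    _ = _ := by ring
  refine ⟨part1, ?_⟩
  rintro ⟨h1, h2⟩
  have key : (2:ℝ) ^ N * (2:ℝ) ^ (-N) = 1 := by
    rw [← zpow_add₀ (by norm_num : (2:ℝ) ≠ 0)]; simp
  have hAD : (2:ℝ) ^ (-N) ≤ (1 + (j:ℝ)) ^ (-(1/p)) * D := by
    nlinarith [mul_le_mul_of_nonneg_right h1 hx0.le]
  have hmono2 : omegaStar ω ((2:ℝ) ^ (-N)) ≤ omegaStar ω ((1 + (j:ℝ)) ^ (-(1/p)) * D) :=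
    omegaStar_mono ω hmono hint hx0 hAD
  have hωle : ω ((2:ℝ) ^ (-N)) ≤ omegaStar ω ((2:ℝ) ^ (-N)) :=
    omega_le_omegaStar ω hmono h0 hint hx0
  nlinarith [part1, mul_le_mul_of_nonneg_right h2 (mul_nonneg hc.le hωs0),
    mul_le_mul_of_nonneg_left hmono2 hc.le, mul_le_mul_of_nonneg_left hωle hc.le]
end
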